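/- arXiv:1609.08232 — 3 statements merged into one kernel-verified Lean document; each statement's English description precedes it below -/
import Mathlib

section
/- Let ω = e^{2πi/N} and suppose A, B ∈ GL_N(ℂ) satisfy A B A⁻¹ B⁻¹ = ω · I_N. Then there exist an invertible matrix P and nonzero scalars λ, μ ∈ ℂ such that P A P⁻¹ = λ S_N and P B P⁻¹ = μ D_N, where S_N and D_N are the shift and clock matrices. (Finite Stone–von Neumann uniqueness: up to conjugation and scalars, the clock–shift pair is the unique solution.) -/
/-!
From `A B A⁻¹ B⁻¹ = ω` one gets `B A⁻¹ = ω A⁻¹ B`, so `A⁻ᴺ` commutes with `B` and the two share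
an eigenvector `v`. Rescaling `A⁻¹` to `E = α A⁻¹` with `Eᴺ v = v`, the vectors `Eʲ v` for
`j ∈ ℤ/N` are eigenvectors of `B` for the pairwise distinct eigenvalues `β ωʲ`, hence a basis.
In this basis `B` is `β D_N`, and `A = α E⁻¹` maps `Eʲ v` to `α E^(j-1) v`, so it is `α S_N`.
-/

open Complex Matrix BigOperators

/-- `ω = e^{2πi/N}`, a primitive `N`-th root of unity. -/
noncomputable def clockOmega (N : ℕ) : ℂ := Complex.exp (2 * Real.pi * Complex.I / N)

/-- The `N×N` clock matrix `D_N = diag(1, ω, …, ω^{N-1})`. -/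
noncomputable def clock (N : ℕ) : Matrix (ZMod N) (ZMod N) ℂ :=
  Matrix.diagonal fun i => clockOmega N ^ i.val

/-- The `N×N` cyclic shift matrix: `(S_N)_{i,j} = 1` iff `j ≡ i+1 (mod N)`. -/
noncomputable def shift (N : ℕ) : Matrix (ZMod N) (ZMod N) ℂ :=
  Matrix.of fun i j => if j = i + 1 then 1 else 0

namespace Module.End

theorem exists_hasEigenvector_of_commute {K V : Type*} [Field K] [IsAlgClosed K]
    [AddCommGroup V] [Module K V] [FiniteDimensional K V] [Nontrivial V] {f g : End K V}
    (h : Commute f g) : ∃ a b : K, ∃ v : V, f.HasEigenvector a v ∧ g.HasEigenvector b v := by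
  obtain ⟨b, hb⟩ := g.exists_eigenvalue
  have hW : Set.MapsTo f (g.eigenspace b) (g.eigenspace b) :=
    mapsTo_genEigenspace_of_comm h.symm b 1
  have : Nontrivial (g.eigenspace b) := Submodule.nontrivial_iff_ne_bot.mpr hb
  obtain ⟨a, ha⟩ := exists_eigenvalue (f.restrict hW)
  obtain ⟨⟨w, hwg⟩, hwf⟩ := ha.exists_hasEigenvector
  have hw0 : w ≠ 0 := by simpa using hwf.2
  exact ⟨a, b, w, ⟨mem_eigenspace_iff.mpr (congrArg Subtype.val hwf.apply_eq_smul), hw0⟩, hwg, hw0⟩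

end Module.End

namespace Matrix

variable {K n : Type*} [Field K] [Fintype n] [DecidableEq n]

theorem exists_common_eigenvector_of_commute [IsAlgClosed K] [Nonempty n] {M M' : Matrix n n K}
    (h : Commute M M') : ∃ v : n → K, v ≠ 0 ∧ ∃ a b : K, M *ᵥ v = a • v ∧ M' *ᵥ v = b • v := by
  obtain ⟨a, b, v, ha, hb⟩ :=
    Module.End.exists_hasEigenvector_of_commute (h.map Matrix.toLinAlgEquiv')
  exact ⟨v, ha.2, a, b, by simpa using ha.apply_eq_smul, by simpa using hb.apply_eq_smul⟩

theorem eigenvalue_ne_zero_of_isUnit {M : Matrix n n K} (hM : IsUnit M) {v : n → K} (hv : v ≠ 0)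
    {a : K} (ha : M *ᵥ v = a • v) : a ≠ 0 := by
  rintro rfl
  exact hv (mulVec_injective_iff_isUnit.mpr hM (by rw [ha, zero_smul, mulVec_zero]))

theorem mul_inv_eq_smul_inv_mul_of_commutator_eq {A B : Matrix n n K} (hA : IsUnit A)
    (hB : IsUnit B) {c : K} (h : A * B * A⁻¹ * B⁻¹ = c • 1) : B * A⁻¹ = c • (A⁻¹ * B) := by
  have hABA : A * B * A⁻¹ = c • B := by
    rw [← Matrix.mul_one (A * B * A⁻¹), ← nonsing_inv_mul B ((isUnit_iff_isUnit_det B).mp hB),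
      ← Matrix.mul_assoc, h, smul_mul, Matrix.one_mul]
  rw [← Matrix.mul_smul, ← hABA, Matrix.mul_assoc A,
    nonsing_inv_mul_cancel_left _ _ ((isUnit_iff_isUnit_det A).mp hA)]

theorem mul_pow_eq_smul_pow_mul {B E : Matrix n n K} {c : K} (h : B * E = c • (E * B)) (m : ℕ) :
    B * E ^ m = c ^ m • (E ^ m * B) := by
  have hsemi : SemiconjBy B E (c • E) := by rw [SemiconjBy, h, smul_mul]
  rw [(hsemi.pow_right m).eq, smul_pow, smul_mul]

theorem exists_periodic_eigenvector_of_commutator_eq [IsAlgClosed K] [Nonempty n] {N : ℕ}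
    [NeZero N] {A B : Matrix n n K} {ω : K}
    (hωN : ω ^ N = 1) (hA : IsUnit A) (hB : IsUnit B) (h : A * B * A⁻¹ * B⁻¹ = ω • 1) :
    ∃ E : Matrix n n K, ∃ v : n → K, ∃ α β : K, α ≠ 0 ∧ β ≠ 0 ∧ v ≠ 0 ∧
      A * E = α • 1 ∧ B * E = ω • (E * B) ∧ B *ᵥ v = β • v ∧ E ^ N *ᵥ v = v := by
  have hBA := mul_inv_eq_smul_inv_mul_of_commutator_eq hA hB h
  have hcomm : Commute B (A⁻¹ ^ N) := by
    rw [Commute, SemiconjBy, mul_pow_eq_smul_pow_mul hBA, hωN, one_smul]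
  obtain ⟨v, hv0, β, γ, hBv, hAv⟩ := exists_common_eigenvector_of_commute hcomm
  have hβ := eigenvalue_ne_zero_of_isUnit hB hv0 hBv
  have hγ := eigenvalue_ne_zero_of_isUnit ((isUnit_nonsing_inv_iff.mpr hA).pow N) hv0 hAv
  obtain ⟨α, hα⟩ := IsAlgClosed.exists_pow_nat_eq γ⁻¹ (NeZero.pos N)
  have hα0 : α ≠ 0 := by
    rintro rfl
    exact inv_ne_zero hγ (by rw [← hα, zero_pow (NeZero.ne N)])
  refine ⟨α • A⁻¹, v, α, β, hα0, hβ, hv0, ?_, ?_, hBv, ?_⟩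
  · rw [Matrix.mul_smul, mul_nonsing_inv _ ((isUnit_iff_isUnit_det A).mp hA)]
  · rw [Matrix.mul_smul, hBA, smul_comm, smul_mul]
  · rw [smul_pow, smul_mulVec, hAv, hα, smul_smul, inv_mul_cancel₀ hγ, one_smul]

theorem inv_mul_mul_eq_of_mul_eq {Q A S : Matrix n n K} (hQ : IsUnit Q) (h : A * Q = Q * S) :
    Q⁻¹ * A * Q = S := by
  rw [Matrix.mul_assoc, h, nonsing_inv_mul_cancel_left _ _ ((isUnit_iff_isUnit_det Q).mp hQ)]

def orbitMatrix (E : Matrix n n K) (v : n → K) (N : ℕ) : Matrix n (ZMod N) K :=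
  of fun i j => (E ^ j.val *ᵥ v) i

section Orbit

variable {N : ℕ} {E : Matrix n n K} {v : n → K}

theorem mul_orbitMatrix_apply (M : Matrix n n K) (i : n) (j : ZMod N) :
    (M * orbitMatrix E v N) i j = (M *ᵥ (E ^ j.val *ᵥ v)) i :=
  rfl

theorem pow_mod_mulVec_of_pow_mulVec_eq (hv : E ^ N *ᵥ v = v) (m : ℕ) :
    E ^ (m % N) *ᵥ v = E ^ m *ᵥ v := by
  have hperiod : ∀ k, E ^ (N * k) *ᵥ v = v := by
    intro k
    induction k with
    | zero => simp
    | succ k ih => rw [Nat.mul_succ, pow_add, ← mulVec_mulVec, hv, ih]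
  conv_rhs => rw [← Nat.mod_add_div m N, pow_add, ← mulVec_mulVec, hperiod]

theorem pow_val_add_one_mulVec [NeZero N] (hv : E ^ N *ᵥ v = v) (j : ZMod N) :
    E ^ (j + 1).val *ᵥ v = E *ᵥ (E ^ j.val *ᵥ v) := by
  rw [ZMod.val_add, ZMod.val_one_eq_one_mod, Nat.add_mod_mod, pow_mod_mulVec_of_pow_mulVec_eq hv,
    pow_succ', mulVec_mulVec]

theorem pow_mulVec_ne_zero [NeZero N] (hv : E ^ N *ᵥ v = v) (hv0 : v ≠ 0) (m : ℕ) :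
    E ^ m *ᵥ v ≠ 0 := by
  intro h
  have hlt := Nat.mod_lt m (NeZero.pos N)
  apply hv0
  rw [← hv, ← Nat.sub_add_cancel hlt.le, pow_add, ← mulVec_mulVec,
    pow_mod_mulVec_of_pow_mulVec_eq hv, h, mulVec_zero]

theorem mulVec_pow_mulVec_of_mul_eq_smul {B : Matrix n n K} {ω β : K}
    (hBE : B * E = ω • (E * B)) (hBv : B *ᵥ v = β • v) (m : ℕ) :
    B *ᵥ (E ^ m *ᵥ v) = (β * ω ^ m) • (E ^ m *ᵥ v) := by
  rw [mulVec_mulVec, mul_pow_eq_smul_pow_mul hBE, smul_mulVec, ← mulVec_mulVec, hBv,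
    mulVec_smul, smul_smul, mul_comm]

theorem isUnit_orbitMatrix [NeZero N] {E B : Matrix (ZMod N) (ZMod N) K} {v : ZMod N → K}
    {ω β : K} (hω : IsPrimitiveRoot ω N) (hBE : B * E = ω • (E * B)) (hBv : B *ᵥ v = β • v)
    (hβ : β ≠ 0) (hv : E ^ N *ᵥ v = v) (hv0 : v ≠ 0) : IsUnit (orbitMatrix E v N) := by
  rw [← linearIndependent_cols_iff_isUnit]
  refine Module.End.eigenvectors_linearIndependent' (toLin' B) (fun j : ZMod N => β * ω ^ j.val)
    ?_ _ fun j => ⟨?_, pow_mulVec_ne_zero hv hv0 _⟩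
  · intro j k hjk
    exact ZMod.val_injective N (hω.pow_inj j.val_lt k.val_lt (mul_left_cancel₀ hβ hjk))
  · exact Module.End.mem_eigenspace_iff.mpr (mulVec_pow_mulVec_of_mul_eq_smul hBE hBv _)

end Orbit

end Matrix

section ClockShift

variable {n : Type*} [Fintype n] [DecidableEq n] {N : ℕ} [NeZero N]

theorem mul_shift_apply {m : Type*} (M : Matrix m (ZMod N) ℂ) (i : m) (j : ZMod N) :
    (M * shift N) i j = M i (j - 1) := by
  simp only [mul_apply, shift, of_apply, mul_ite, mul_one, mul_zero]
  simp_rw [eq_comm (a := j), ← eq_sub_iff_add_eq]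
  exact Fintype.sum_ite_eq' _ _

theorem mul_orbitMatrix_eq_smul_mul_shift {A E : Matrix n n ℂ} {v : n → ℂ} {α : ℂ}
    (hAE : A * E = α • 1) (hv : E ^ N *ᵥ v = v) :
    A * orbitMatrix E v N = α • (orbitMatrix E v N * shift N) := by
  ext i j
  rw [Matrix.smul_apply, mul_shift_apply, mul_orbitMatrix_apply, ← sub_add_cancel j 1,
    pow_val_add_one_mulVec hv, add_sub_cancel_right, mulVec_mulVec, hAE, smul_mulVec,
    one_mulVec]
  rfl

theorem mul_orbitMatrix_eq_smul_mul_clock {B E : Matrix n n ℂ} {v : n → ℂ} {β : ℂ}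
    (hBE : B * E = clockOmega N • (E * B)) (hBv : B *ᵥ v = β • v) :
    B * orbitMatrix E v N = β • (orbitMatrix E v N * clock N) := by
  ext i j
  rw [Matrix.smul_apply, clock, mul_diagonal, mul_orbitMatrix_apply,
    mulVec_pow_mulVec_of_mul_eq_smul hBE hBv, orbitMatrix, of_apply, Pi.smul_apply, smul_eq_mul,
    smul_eq_mul]
  ring

end ClockShift

/-- Finite Stone–von Neumann uniqueness: any pair `(A,B)` with `A B A⁻¹ B⁻¹ = ω·I`,
`ω = e^{2πi/N}`, is simultaneously conjugate to the shift and clock matrices up to scalars. -/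
theorem stone_von_neumann_finite (N : ℕ) [NeZero N] (A B : Matrix (ZMod N) (ZMod N) ℂ)
    (hA : IsUnit A) (hB : IsUnit B)
    (h : A * B * A⁻¹ * B⁻¹ = clockOmega N • (1 : Matrix (ZMod N) (ZMod N) ℂ)) :
    ∃ P : Matrix (ZMod N) (ZMod N) ℂ, IsUnit P ∧ ∃ lam mu : ℂ, lam ≠ 0 ∧ mu ≠ 0 ∧
      P * A * P⁻¹ = lam • shift N ∧ P * B * P⁻¹ = mu • clock N := by
  have hω : IsPrimitiveRoot (clockOmega N) N := Complex.isPrimitiveRoot_exp N (NeZero.ne N)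
  obtain ⟨E, v, α, β, hα, hβ, hv0, hAE, hBE, hBv, hEv⟩ :=
    exists_periodic_eigenvector_of_commutator_eq hω.pow_eq_one hA hB h
  set Q := orbitMatrix E v N
  have hQ : IsUnit Q := isUnit_orbitMatrix hω hBE hBv hβ hEv hv0
  have hQinv : Q⁻¹⁻¹ = Q := nonsing_inv_nonsing_inv _ ((isUnit_iff_isUnit_det Q).mp hQ)
  refine ⟨Q⁻¹, isUnit_nonsing_inv_iff.mpr hQ, α, β, hα, hβ, ?_, ?_⟩ <;>
    rw [hQinv] <;> apply inv_mul_mul_eq_of_mul_eq hQ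
  · rw [Matrix.mul_smul]
    exact mul_orbitMatrix_eq_smul_mul_shift hAE hEv
  · rw [Matrix.mul_smul]
    exact mul_orbitMatrix_eq_smul_mul_clock hBE hBv
end

section
/- Let N ≥ 1, M ∈ ℤ, and let g : ℕ → ℂ be any function. Then (1/N) · Σ_{k=1}^{N} e^{2πiMk/N} · Σ_{s | gcd(k,N)} s · g(N/s) = Σ_{s | gcd(M,N)} g(s). -/
/-!
Write `ζ = exp(2πi/N)`, so the phase is `ζ ^ (M k)`, and sort the pairs `(k, s)` by `s ∣ N` instead
of by `k`. The multiples `k = s j` of `s` in `[1, N]` turn the inner sum into the full sum of powers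
of `(ζ ^ s) ^ M`, where `ζ ^ s` is a primitive `(N / s)`-th root of unity; it equals `N / s` when
`N / s ∣ M` and vanishes otherwise. The weight `s` then cancels against `1 / N`, and `s ↦ N / s`
permutes the divisors of `N`.
-/

open Complex Finset

theorem sum_Icc_pow_eq_zero_of_pow_eq_one {R : Type*} [CommRing R] [IsDomain R] {ζ : R} {d : ℕ}
    (hζ : ζ ^ d = 1) (hζ1 : ζ ≠ 1) : ∑ j ∈ Icc 1 d, ζ ^ j = 0 := by
  have hgeom : ∑ j ∈ range d, ζ ^ j = 0 := by
    have hmul := geom_sum_mul ζ d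
    rw [hζ, sub_self, mul_eq_zero] at hmul
    exact hmul.resolve_right (sub_ne_zero.mpr hζ1)
  rw [← Ico_add_one_right_eq_Icc, sum_Ico_eq_sum_range, add_tsub_cancel_right]
  simp_rw [add_comm 1, pow_succ, ← sum_mul, hgeom, zero_mul]

theorem IsPrimitiveRoot.sum_Icc_zpow_pow {K : Type*} [Field K] {η : K} {d : ℕ}
    (hη : IsPrimitiveRoot η d) (M : ℤ) :
    ∑ j ∈ Icc 1 d, (η ^ M) ^ j = if (d : ℤ) ∣ M then (d : K) else 0 := by
  split_ifs with hdM
  · simp [(hη.zpow_eq_one_iff_dvd M).mpr hdM]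
  · refine sum_Icc_pow_eq_zero_of_pow_eq_one ?_ (mt (hη.zpow_eq_one_iff_dvd M).mp hdM)
    rw [← zpow_natCast, ← zpow_mul, mul_comm, zpow_mul, zpow_natCast, hη.pow_eq_one, one_zpow]

theorem Nat.sum_Icc_filter_dvd {A : Type*} [AddCommMonoid A] {s : ℕ} (hs : s ≠ 0) (d : ℕ)
    (f : ℕ → A) : ∑ k ∈ Icc 1 (s * d) with s ∣ k, f k = ∑ j ∈ Icc 1 d, f (s * j) := by
  have hs' := Nat.pos_of_ne_zero hs
  symm
  refine sum_nbij' (s * ·) (· / s) ?_ ?_ (fun j _ => Nat.mul_div_cancel_left j hs') ?_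
    (fun _ _ => rfl)
  · intro j hj
    simp only [mem_filter, mem_Icc] at hj ⊢
    exact ⟨⟨by nlinarith, by nlinarith⟩, dvd_mul_right s j⟩
  · intro k hk
    simp only [mem_filter, mem_Icc] at hk ⊢
    obtain ⟨⟨hk1, hk2⟩, j, rfl⟩ := hk
    rw [Nat.mul_div_cancel_left j hs']
    constructor <;> nlinarith
  · intro k hk
    exact Nat.mul_div_cancel' (mem_filter.mp hk).2

theorem IsPrimitiveRoot.sum_Icc_filter_dvd_zpow {K : Type*} [Field K] {ζ : K} {N s : ℕ}
    (hζ : IsPrimitiveRoot ζ N) (hN : N ≠ 0) (hs : s ∣ N) (M : ℤ) :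
    ∑ k ∈ Icc 1 N with s ∣ k, ζ ^ (M * k) =
      if ((N / s : ℕ) : ℤ) ∣ M then ((N / s : ℕ) : K) else 0 := by
  obtain ⟨d, rfl⟩ := hs
  have hs0 : s ≠ 0 := left_ne_zero_of_mul hN
  rw [Nat.mul_div_cancel_left d (Nat.pos_of_ne_zero hs0), Nat.sum_Icc_filter_dvd hs0,
    ← (hζ.pow (Nat.pos_of_ne_zero hN) rfl).sum_Icc_zpow_pow M]
  refine sum_congr rfl fun j _ => ?_
  simp only [← zpow_natCast, ← zpow_mul]
  push_cast
  ring_nf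

theorem Nat.divisors_gcd_eq_filter (k : ℕ) {N : ℕ} (hN : N ≠ 0) :
    (Nat.gcd k N).divisors = {s ∈ N.divisors | s ∣ k} := by
  rw [← divisors_filter_dvd_of_dvd hN (Nat.gcd_dvd_right k N)]
  exact filter_congr fun s hs => by rw [Nat.dvd_gcd_iff, and_iff_left (Nat.dvd_of_mem_divisors hs)]

theorem Int.divisors_gcd_eq_filter (M : ℤ) {N : ℕ} (hN : N ≠ 0) :
    (Int.gcd M N).divisors = {s ∈ N.divisors | ((s : ℕ) : ℤ) ∣ M} := by
  simp only [Int.gcd, Int.natAbs_natCast, Int.natCast_dvd]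
  exact Nat.divisors_gcd_eq_filter _ hN

/-- Projection onto the `θ = 2πM/N` superselection sector:
`(1/N) Σ_{k=1}^{N} e^{2πiMk/N} Σ_{s|gcd(k,N)} s·g(N/s) = Σ_{s|gcd(M,N)} g(s)`. -/
theorem theta_sector_projection (N : ℕ) (hN : 1 ≤ N) (M : ℤ) (g : ℕ → ℂ) :
    (1 / (N : ℂ)) * ∑ k ∈ Finset.Icc 1 N,
        Complex.exp (2 * Real.pi * Complex.I * M * k / N) *
          ∑ s ∈ (Nat.gcd k N).divisors, (s : ℂ) * g (N / s)
      = ∑ s ∈ (Int.gcd M N).divisors, g s := by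
  have hN0 : N ≠ 0 := Nat.one_le_iff_ne_zero.mp hN
  have hζ := Complex.isPrimitiveRoot_exp N hN0
  have hexp (k : ℕ) :
      exp (2 * Real.pi * I * M * k / N) = exp (2 * Real.pi * I / N) ^ (M * k) := by
    rw [← exp_int_mul]
    push_cast
    ring_nf
  calc _ = 1 / (N : ℂ) * ∑ s ∈ N.divisors,
        (∑ k ∈ Icc 1 N with s ∣ k, exp (2 * Real.pi * I / N) ^ (M * k)) * (s * g (N / s)) := by
        congr 1
        simp_rw [hexp, Nat.divisors_gcd_eq_filter _ hN0, mul_sum, sum_filter]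
        rw [sum_comm]
        simp_rw [sum_mul, ite_mul, zero_mul]
    _ = ∑ s ∈ N.divisors, if ((N / s : ℕ) : ℤ) ∣ M then g (N / s) else 0 := by
        rw [mul_sum]
        refine sum_congr rfl fun s hs => ?_
        rw [hζ.sum_Icc_filter_dvd_zpow hN0 (Nat.dvd_of_mem_divisors hs)]
        split_ifs
        · have hNs : ((N / s : ℕ) : ℂ) * s = N := by
            exact_mod_cast Nat.div_mul_cancel (Nat.dvd_of_mem_divisors hs)
          rw [← mul_assoc ((N / s : ℕ) : ℂ), hNs, one_div,
            inv_mul_cancel_left₀ (Nat.cast_ne_zero.mpr hN0)]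
        · simp
    _ = ∑ s ∈ (Int.gcd M N).divisors, g s := by
        rw [Nat.sum_div_divisors N fun d => if (d : ℤ) ∣ M then g d else 0, ← sum_filter,
          Int.divisors_gcd_eq_filter M hN0]
end

section
/- Let N ≥ 1 and let F : ℕ → ℂ be any function. Then, as formal power series in q, Σ_{d|N} Σ_{m≥1} q^{d·m} Σ_{s | (N/d)·m} F(s·d) = Σ_{k≥1} q^{k} Σ_{d|N} Σ_{s|k} F(s·d). Equivalently, for every k ≥ 1: Σ_{d | gcd(N,k)} Σ_{s | (N/d)(k/d)} F(sd) = Σ_{d|N} Σ_{s|k} F(ds). -/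
open BigOperators

/-- Coefficient-wise form of the Hecke-operator identity: for every `k ≥ 1`,
`Σ_{d|gcd(N,k)} Σ_{s|(N/d)(k/d)} F(sd) = Σ_{d|N} Σ_{s|k} F(ds)`. -/
theorem hecke_powerseries_identity (N : ℕ) (hN : 1 ≤ N) (F : ℕ → ℂ) :
    ∀ k : ℕ, 1 ≤ k →
      ∑ d ∈ (Nat.gcd N k).divisors, ∑ s ∈ ((N / d) * (k / d)).divisors, F (s * d)
        = ∑ d ∈ N.divisors, ∑ s ∈ k.divisors, F (d * s) := by
  intro k hk
  have hN0 : N ≠ 0 := by omega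
  have hk0 : k ≠ 0 := by omega
  rw [Finset.sum_sigma', Finset.sum_sigma']
  refine Finset.sum_nbij'
    (fun p => ⟨p.1 * p.2 / (Nat.gcd (p.1 * p.2) k / p.1), Nat.gcd (p.1 * p.2) k / p.1⟩)
    (fun p => ⟨Nat.gcd p.1 (k / p.2), (p.1 / Nat.gcd p.1 (k / p.2)) * p.2⟩)
    ?_ ?_ ?_ ?_ ?_
  · -- forward membership
    rintro ⟨e, t⟩ hp
    simp only [Finset.mem_sigma, Nat.mem_divisors] at hp ⊢
    obtain ⟨⟨he, -⟩, ht, hprod0⟩ := hp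
    have heN : e ∣ N := he.trans (Nat.gcd_dvd_left _ _)
    have hek : e ∣ k := he.trans (Nat.gcd_dvd_right _ _)
    have he0 : e ≠ 0 := by rintro rfl; exact hN0 (Nat.eq_zero_of_zero_dvd heN)
    have ht0 : t ≠ 0 := by rintro rfl; exact hprod0 (Nat.eq_zero_of_zero_dvd ht)
    set n := e * t with hn
    have hn0 : n ≠ 0 := Nat.mul_ne_zero he0 ht0
    set g := Nat.gcd n k with hg
    have heg : e ∣ g := Nat.dvd_gcd ⟨t, rfl⟩ hek
    set s := g / e with hs
    have hsg : s ∣ g := Nat.div_dvd_of_dvd heg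
    have hsk : s ∣ k := hsg.trans (Nat.gcd_dvd_right _ _)
    have hsn : s ∣ n := hsg.trans (Nat.gcd_dvd_left _ _)
    have hs0 : s ≠ 0 := by rintro h; exact hk0 (Nat.eq_zero_of_zero_dvd (h ▸ hsk))
    -- show n / s ∣ N
    have hNe : e * (N / e) = N := Nat.mul_div_cancel' heN
    have hke : e * (k / e) = k := Nat.mul_div_cancel' hek
    have h1 : e * n ∣ N * n := mul_dvd_mul heN dvd_rfl
    have h2 : e * n ∣ N * k := by
      have : e * e * t ∣ e * e * ((N / e) * (k / e)) := mul_dvd_mul_left _ ht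
      calc e * n = e * e * t := by rw [hn]; ring
        _ ∣ e * e * ((N / e) * (k / e)) := this
        _ = (e * (N / e)) * (e * (k / e)) := by ring
        _ = N * k := by rw [hNe, hke]
    have h3 : e * n ∣ N * g := by
      rw [hg, ← Nat.gcd_mul_left]
      exact Nat.dvd_gcd h1 h2
    have hgse : g = s * e := by rw [hs, Nat.div_mul_cancel heg]
    have h4 : n * e ∣ (N * s) * e := by
      calc n * e = e * n := by ring
        _ ∣ N * g := h3
        _ = (N * s) * e := by rw [hgse]; ring
    have h5 : n ∣ N * s := (Nat.mul_dvd_mul_iff_right (Nat.pos_of_ne_zero he0)).mp h4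
    have hds : n / s * s = n := Nat.div_mul_cancel hsn
    have hdN : n / s ∣ N :=
      (Nat.mul_dvd_mul_iff_right (Nat.pos_of_ne_zero hs0)).mp (by rw [hds]; exact h5)
    exact ⟨⟨hdN, hN0⟩, hsk, hk0⟩
  · -- backward membership
    rintro ⟨d, s⟩ hp
    simp only [Finset.mem_sigma, Nat.mem_divisors] at hp ⊢
    obtain ⟨⟨hd, -⟩, hs, -⟩ := hp
    have hd0 : d ≠ 0 := by rintro rfl; exact hN0 (Nat.eq_zero_of_zero_dvd hd)
    have hs0 : s ≠ 0 := by rintro rfl; exact hk0 (Nat.eq_zero_of_zero_dvd hs)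
    set e := Nat.gcd d (k / s) with he
    have hksk : k / s ∣ k := Nat.div_dvd_of_dvd hs
    have hks0 : k / s ≠ 0 := Nat.pos_iff_ne_zero.mp
      (Nat.div_pos (Nat.le_of_dvd (Nat.pos_of_ne_zero hk0) hs) (Nat.pos_of_ne_zero hs0))
    have hed : e ∣ d := Nat.gcd_dvd_left _ _
    have heks : e ∣ k / s := Nat.gcd_dvd_right _ _
    have heN : e ∣ N := hed.trans hd
    have hek : e ∣ k := heks.trans hksk
    have he0 : e ≠ 0 := by rintro h; exact hd0 (Nat.eq_zero_of_zero_dvd (h ▸ hed))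
    have heg : e ∣ Nat.gcd N k := Nat.dvd_gcd heN hek
    have hNe : e * (N / e) = N := Nat.mul_div_cancel' heN
    have hke : e * (k / e) = k := Nat.mul_div_cancel' hek
    have hNe0 : N / e ≠ 0 := by rintro h; rw [h, Nat.mul_zero] at hNe; exact hN0 hNe.symm
    have hke0 : k / e ≠ 0 := by rintro h; rw [h, Nat.mul_zero] at hke; exact hk0 hke.symm
    have hkss : k / s * s = k := Nat.div_mul_cancel hs
    -- key divisibility : e * (d * s) ∣ N * k
    have key : e * (d * s) ∣ N * k := by
      have h1 : Nat.gcd (d * (d * s)) (k / s * (d * s)) = e * (d * s) := Nat.gcd_mul_right _ _ _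
      have h2 : e * (d * s) ∣ k / s * (d * s) := h1 ▸ Nat.gcd_dvd_right _ _
      have h3 : k / s * (d * s) = k * d := by
        rw [show k / s * (d * s) = (k / s * s) * d by ring, hkss]
      obtain ⟨c, hc⟩ := hd
      calc e * (d * s) ∣ k * d := h3 ▸ h2
        _ ∣ N * k := ⟨c, by rw [hc]; ring⟩
    have hde : e * (d / e) = d := Nat.mul_div_cancel' hed
    have ht : d / e * s ∣ N / e * (k / e) := by
      have h4 : (d / e * s) * (e * e) ∣ (N / e * (k / e)) * (e * e) := by
        calc (d / e * s) * (e * e) = e * ((e * (d / e)) * s) := by ring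
          _ = e * (d * s) := by rw [hde]
          _ ∣ N * k := key
          _ = (N / e * (k / e)) * (e * e) := by
              rw [show N / e * (k / e) * (e * e) = (e * (N / e)) * (e * (k / e)) by ring, hNe, hke]
      exact (Nat.mul_dvd_mul_iff_right (Nat.pos_of_ne_zero (Nat.mul_ne_zero he0 he0))).mp h4
    exact ⟨⟨heg, Nat.gcd_ne_zero_left hN0⟩, ht, Nat.mul_ne_zero hNe0 hke0⟩
  · -- left inverse : j (i (e, t)) = (e, t)
    rintro ⟨e, t⟩ hp
    beta_reduce
    simp only [Finset.mem_sigma, Nat.mem_divisors] at hp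
    obtain ⟨⟨he, -⟩, ht, hprod0⟩ := hp
    have heN : e ∣ N := he.trans (Nat.gcd_dvd_left _ _)
    have hek : e ∣ k := he.trans (Nat.gcd_dvd_right _ _)
    have he0 : e ≠ 0 := by rintro rfl; exact hN0 (Nat.eq_zero_of_zero_dvd heN)
    have ht0 : t ≠ 0 := by rintro rfl; exact hprod0 (Nat.eq_zero_of_zero_dvd ht)
    set n := e * t with hn
    have hn0 : n ≠ 0 := Nat.mul_ne_zero he0 ht0
    set g := Nat.gcd n k with hg
    have heg : e ∣ g := Nat.dvd_gcd ⟨t, rfl⟩ hek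
    set s := g / e with hs
    have hsg : s ∣ g := Nat.div_dvd_of_dvd heg
    have hsk : s ∣ k := hsg.trans (Nat.gcd_dvd_right _ _)
    have hsn : s ∣ n := hsg.trans (Nat.gcd_dvd_left _ _)
    have hs0 : s ≠ 0 := by rintro h; exact hk0 (Nat.eq_zero_of_zero_dvd (h ▸ hsk))
    have hgse : g = e * s := (Nat.mul_div_cancel' heg).symm
    set d := n / s with hd
    have hds : d * s = n := Nat.div_mul_cancel hsn
    have hkss : k / s * s = k := Nat.div_mul_cancel hsk
    have hgcd : Nat.gcd d (k / s) = e := by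
      have h1 : Nat.gcd (d * s) (k / s * s) = Nat.gcd d (k / s) * s := Nat.gcd_mul_right _ _ _
      rw [hds, hkss, ← hg, hgse] at h1
      exact (Nat.eq_of_mul_eq_mul_right (Nat.pos_of_ne_zero hs0) h1).symm
    have hed : e ∣ d := hgcd ▸ Nat.gcd_dvd_left _ _
    have htval : d / e * s = t := by
      have h2 : e * (d / e * s) = e * t := by
        rw [← mul_assoc, Nat.mul_div_cancel' hed, hds]
      exact Nat.eq_of_mul_eq_mul_left (Nat.pos_of_ne_zero he0) h2
    rw [show Nat.gcd (e * t / (Nat.gcd (e * t) k / e)) (k / (Nat.gcd (e * t) k / e))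
          = Nat.gcd d (k / s) from rfl, hgcd, htval]
  · -- right inverse : i (j (d, s)) = (d, s)
    rintro ⟨d, s⟩ hp
    beta_reduce
    simp only [Finset.mem_sigma, Nat.mem_divisors] at hp
    obtain ⟨⟨hd, -⟩, hs, -⟩ := hp
    have hd0 : d ≠ 0 := by rintro rfl; exact hN0 (Nat.eq_zero_of_zero_dvd hd)
    have hs0 : s ≠ 0 := by rintro rfl; exact hk0 (Nat.eq_zero_of_zero_dvd hs)
    set e := Nat.gcd d (k / s) with he
    have hed : e ∣ d := Nat.gcd_dvd_left _ _
    have he0 : e ≠ 0 := by rintro h; exact hd0 (Nat.eq_zero_of_zero_dvd (h ▸ hed))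
    have hde : e * (d / e) = d := Nat.mul_div_cancel' hed
    have hkss : k / s * s = k := Nat.div_mul_cancel hs
    have hn : e * (d / e * s) = d * s := by rw [← mul_assoc, hde]
    have hg : Nat.gcd (d * s) k = e * s := by
      rw [← hkss, Nat.gcd_mul_right, ← he]
    have hgs : Nat.gcd (e * (d / e * s)) k / e = s := by
      rw [hn, hg, Nat.mul_div_cancel_left _ (Nat.pos_of_ne_zero he0)]
    show (⟨e * (d / e * s) / (Nat.gcd (e * (d / e * s)) k / e),
          Nat.gcd (e * (d / e * s)) k / e⟩ : Σ _ : ℕ, ℕ) = ⟨d, s⟩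
    · rw [hgs, hn, Nat.mul_div_cancel _ (Nat.pos_of_ne_zero hs0)]
  · -- values agree
    rintro ⟨e, t⟩ hp
    simp only [Finset.mem_sigma, Nat.mem_divisors] at hp
    obtain ⟨⟨he, -⟩, ht, hprod0⟩ := hp
    have hek : e ∣ k := he.trans (Nat.gcd_dvd_right _ _)
    have heN : e ∣ N := he.trans (Nat.gcd_dvd_left _ _)
    have he0 : e ≠ 0 := by rintro rfl; exact hN0 (Nat.eq_zero_of_zero_dvd heN)
    have heg : e ∣ Nat.gcd (e * t) k := Nat.dvd_gcd ⟨t, rfl⟩ hek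
    have hsg : Nat.gcd (e * t) k / e ∣ Nat.gcd (e * t) k := Nat.div_dvd_of_dvd heg
    have hsn : Nat.gcd (e * t) k / e ∣ e * t := hsg.trans (Nat.gcd_dvd_left _ _)
    show F (t * e) = F (e * t / (Nat.gcd (e * t) k / e) * (Nat.gcd (e * t) k / e))
    rw [Nat.div_mul_cancel hsn, mul_comm]
end
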